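/- Let G be a compact Lie group, p : E → B a G-fibration, f : B' → B a G-map, and let p̃ : B' ×_B E → B' be the pullback G-fibration, where B' ×_B E = {(b', e) ∈ B' × E : f(b') = p(e)} carries the diagonal G-action and p̃(b', e) = b'. Then for every n ≥ 2, TC_{G,n}[p̃ : B' ×_B E → B'] ≤ TC_{G,n}[p : E → B]. -/

import Mathlib

open Set

noncomputable section

/-- Two maps `f g : X → Y` are `G`-homotopic on a subset `S ⊆ X`, with respect to the
actions `σX` on `X` and `σY` on `Y`. -/
def GHomotopicOn (G : Type*) {X Y : Type*} [TopologicalSpace X] [TopologicalSpace Y]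
    (σX : G → X → X) (σY : G → Y → Y) (f g : X → Y) (S : Set X) : Prop :=
  ∃ H : X × unitInterval → Y,
    ContinuousOn H (S ×ˢ (Set.univ : Set unitInterval)) ∧
    (∀ x ∈ S, H (x, 0) = f x) ∧
    (∀ x ∈ S, H (x, 1) = g x) ∧
    (∀ a : G, ∀ x ∈ S, ∀ t, H (σX a x, t) = σY a (H (x, t)))

/-- The equivariant sectional category `secat_G(p)` of a map `p : E → B`, with respect to
actions `σE` on `E` and `σB` on `B`: the least `k` such that `B` is covered by `k`
`G`-invariant open sets, each admitting a continuous equivariant homotopy section of `p`;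
`⊤` if there is no such `k`. -/
def eqSecat (G : Type*) {E B : Type*} [TopologicalSpace E] [TopologicalSpace B]
    (σE : G → E → E) (σB : G → B → B) (p : E → B) : ℕ∞ :=
  sInf {N : ℕ∞ | ∃ k : ℕ, N = (k : ℕ∞) ∧ ∃ U : Fin k → Set B,
    (∀ i, IsOpen (U i)) ∧
    (∀ i, ∀ a : G, ∀ b ∈ U i, σB a b ∈ U i) ∧
    (∀ b : B, ∃ i, b ∈ U i) ∧
    (∀ i, ∃ s : B → E, ContinuousOn s (U i) ∧
      (∀ a : G, ∀ b ∈ U i, s (σB a b) = σE a (s b)) ∧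
      GHomotopicOn G σB σB (p ∘ s) id (U i))}

/-- A `G`-invariant open subset `U` of `X` is `G`-categorical if the inclusion `U ↪ X`
is `G`-homotopic to a map taking values in a single orbit. -/
def GCategoricalSet (G : Type*) {X : Type*} [TopologicalSpace X]
    (σ : G → X → X) (U : Set X) : Prop :=
  IsOpen U ∧ (∀ a : G, ∀ x ∈ U, σ a x ∈ U) ∧
  ∃ x₀ : X, ∃ H : X × unitInterval → X,
    ContinuousOn H (U ×ˢ (Set.univ : Set unitInterval)) ∧
    (∀ x ∈ U, H (x, 0) = x) ∧
    (∀ x ∈ U, ∃ a : G, H (x, 1) = σ a x₀) ∧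
    (∀ a : G, ∀ x ∈ U, ∀ t, H (σ a x, t) = σ a (H (x, t)))

/-- The equivariant (Lusternik–Schnirelmann) category `cat_G(X)`: the least number of
`G`-categorical open sets covering `X`. -/
def eqCat (G : Type*) {X : Type*} [TopologicalSpace X] (σ : G → X → X) : ℕ∞ :=
  sInf {N : ℕ∞ | ∃ k : ℕ, N = (k : ℕ∞) ∧ ∃ U : Fin k → Set X,
    (∀ x : X, ∃ i, x ∈ U i) ∧ (∀ i, GCategoricalSet G σ (U i))}

/-- The time `i/(n-1)` in the unit interval, for `i : Fin n`. -/
def seqTime (n : ℕ) (i : Fin n) : unitInterval :=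
  ⟨(i : ℝ) / ((n : ℝ) - 1), by
    have h0 : 0 < n := i.pos
    have h1 : (0 : ℝ) ≤ (n : ℝ) - 1 := by
      have : (1 : ℝ) ≤ (n : ℝ) := by exact_mod_cast h0
      linarith
    refine ⟨div_nonneg (Nat.cast_nonneg _) h1, ?_⟩
    rcases eq_or_lt_of_le h1 with h | h
    · rw [← h, div_zero]; norm_num
    · rw [div_le_one h]
      have : ((i : ℕ) : ℝ) + 1 ≤ (n : ℝ) := by exact_mod_cast i.is_lt
      linarith⟩

/-- The generalized free path space fibration
`π_n : X^I → X^n`, `γ ↦ (γ(0), γ(1/(n-1)), …, γ(1))`. -/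
def piNMap (X : Type*) [TopologicalSpace X] (n : ℕ) :
    C(unitInterval, X) → (Fin n → X) :=
  fun γ i => γ (seqTime n i)

/-- The action induced on the free path space `X^I` by an action on `X`. -/
def pathAct {G X : Type*} [TopologicalSpace X] (σ : G → X → X)
    (hc : ∀ a : G, Continuous (σ a)) : G → C(unitInterval, X) → C(unitInterval, X) :=
  fun a γ => ⟨fun t => σ a (γ t), (hc a).comp γ.continuous⟩

/-- The diagonal action on `X^n` induced by an action on `X`. -/
def diagAct {G X : Type*} (σ : G → X → X) (n : ℕ) : G → (Fin n → X) → (Fin n → X) :=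
  fun a x i => σ a (x i)

/-- The sequential equivariant topological complexity `TC_{G,n}(X) := secat_G(π_n)`. -/
def eqTC (G : Type*) {X : Type*} [TopologicalSpace X] (σ : G → X → X)
    (hc : ∀ a : G, Continuous (σ a)) (n : ℕ) : ℕ∞ :=
  eqSecat G (pathAct σ hc) (diagAct σ n) (piNMap X n)

/-- The `n`-fold fibre product `E^n_B` of `p : E → B`. -/
def FibProd {E B : Type*} (p : E → B) (n : ℕ) : Type _ :=
  {x : Fin n → E // ∀ i j, p (x i) = p (x j)}

instance {E B : Type*} [TopologicalSpace E] (p : E → B) (n : ℕ) :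
    TopologicalSpace (FibProd p n) :=
  inferInstanceAs (TopologicalSpace {x : Fin n → E // ∀ i j, p (x i) = p (x j)})

/-- The space `E^I_B` of paths in `E` lying in a single fibre of `p : E → B`. -/
def ParPath {E B : Type*} [TopologicalSpace E] (p : E → B) : Type _ :=
  {γ : C(unitInterval, E) // ∀ s t : unitInterval, p (γ s) = p (γ t)}

instance {E B : Type*} [TopologicalSpace E] (p : E → B) :
    TopologicalSpace (ParPath p) :=
  inferInstanceAs (TopologicalSpace
    {γ : C(unitInterval, E) // ∀ s t : unitInterval, p (γ s) = p (γ t)})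

/-- The parametrized endpoint fibration `Π_n : E^I_B → E^n_B`. -/
def PiN {E B : Type*} [TopologicalSpace E] (p : E → B) (n : ℕ) :
    ParPath p → FibProd p n :=
  fun γ => ⟨fun i => γ.1 (seqTime n i), fun _ _ => γ.2 _ _⟩

/-- The action induced on `E^n_B` by a fibrewise-compatible action on `E`. -/
def fibProdAct {G E B : Type*} (σE : G → E → E) (p : E → B)
    (hp : ∀ a : G, ∀ e e' : E, p e = p e' → p (σE a e) = p (σE a e')) (n : ℕ) :
    G → FibProd p n → FibProd p n :=
  fun a x => ⟨fun i => σE a (x.1 i), fun i j => hp a _ _ (x.2 i j)⟩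

/-- The action induced on `E^I_B` by a fibrewise-compatible action on `E`. -/
def parPathAct {G E B : Type*} [TopologicalSpace E] (σE : G → E → E)
    (hc : ∀ a : G, Continuous (σE a)) (p : E → B)
    (hp : ∀ a : G, ∀ e e' : E, p e = p e' → p (σE a e) = p (σE a e')) :
    G → ParPath p → ParPath p :=
  fun a γ => ⟨⟨fun t => σE a (γ.1 t), (hc a).comp γ.1.continuous⟩,
    fun s t => hp a _ _ (γ.2 s t)⟩

/-- The sequential equivariant parametrized topological complexity
`TC_{G,n}[p : E → B] := secat_G(Π_n : E^I_B → E^n_B)`. -/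
def eqPTC (G : Type*) {E B : Type*} [TopologicalSpace E] (σE : G → E → E)
    (hc : ∀ a : G, Continuous (σE a)) (p : E → B)
    (hp : ∀ a : G, ∀ e e' : E, p e = p e' → p (σE a e) = p (σE a e')) (n : ℕ) : ℕ∞ :=
  eqSecat G (parPathAct σE hc p hp) (fibProdAct σE p hp n) (PiN p n)

/-- `σ` is a continuous action of the topological group `G` on `X`,
i.e. `X` is a `G`-space. -/
def IsGAction (G : Type*) [Group G] [TopologicalSpace G] {X : Type*} [TopologicalSpace X]
    (σ : G → X → X) : Prop :=
  (∀ x, σ 1 x = x) ∧ (∀ a b x, σ (a * b) x = σ a (σ b x)) ∧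
  Continuous (fun q : G × X => σ q.1 q.2)

/-- `p : E → B` is a `G`-fibration: a continuous equivariant map with the `G`-homotopy
lifting property with respect to all `G`-spaces. -/
def IsGFibration (G : Type*) [Group G] [TopologicalSpace G] {E : Type u} {B : Type v}
    [TopologicalSpace E] [TopologicalSpace B]
    (σE : G → E → E) (σB : G → B → B) (p : E → B) : Prop :=
  Continuous p ∧ (∀ a e, p (σE a e) = σB a (p e)) ∧
  ∀ (X : Type (max u v)) (_ : TopologicalSpace X) (σX : G → X → X), IsGAction G σX →
    ∀ (f : X → E) (h : X × unitInterval → B),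
      Continuous f → (∀ a x, f (σX a x) = σE a (f x)) →
      Continuous h → (∀ a x t, h (σX a x, t) = σB a (h (x, t))) →
      (∀ x, h (x, 0) = p (f x)) →
      ∃ hl : X × unitInterval → E, Continuous hl ∧
        (∀ a x t, hl (σX a x, t) = σE a (hl (x, t))) ∧
        (∀ x, hl (x, 0) = f x) ∧ (∀ x t, p (hl (x, t)) = h (x, t))

/-- A `G`-space is `G`-connected if all fixed point sets of closed subgroups
are path-connected. -/
def GConnected (G : Type*) [Group G] [TopologicalSpace G] {X : Type*} [TopologicalSpace X]
    (σ : G → X → X) : Prop :=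
  ∀ H : Subgroup G, IsClosed (H : Set G) →
    IsPathConnected {x : X | ∀ h ∈ H, σ h x = x}

/-- A `G`-space is `G`-contractible if its identity map is `G`-homotopic to a map
taking values in a single orbit. -/
def GContractible (G : Type*) {X : Type*} [TopologicalSpace X] (σ : G → X → X) : Prop :=
  ∃ x₀ : X, ∃ H : X × unitInterval → X, Continuous H ∧
    (∀ x, H (x, 0) = x) ∧
    (∀ x, ∃ a : G, H (x, 1) = σ a x₀) ∧
    (∀ a : G, ∀ x t, H (σ a x, t) = σ a (H (x, t)))

/-- Fibrewise `G`-homotopy between fibrewise maps `f g : E → E'` over `B`. -/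
def FibrewiseGHomotopic (G : Type*) {E E' B : Type*} [TopologicalSpace E]
    [TopologicalSpace E'] (σE : G → E → E) (σE' : G → E' → E')
    (p : E → B) (p' : E' → B) (f g : E → E') : Prop :=
  ∃ H : E × unitInterval → E', Continuous H ∧
    (∀ x, H (x, 0) = f x) ∧ (∀ x, H (x, 1) = g x) ∧
    (∀ a : G, ∀ x t, H (σE a x, t) = σE' a (H (x, t))) ∧
    (∀ x t, p' (H (x, t)) = p x)

end

/-!
Strict sections pull back: if `x ↦ γ x` is an equivariant section of `Π_n` over `U ⊆ E^n_B`,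
then `z ↦ (b', γ (φ z))` is one over `φ⁻¹ U ⊆ (B' ×_B E)^n_{B'}`, where `φ` forgets the
`B'`-coordinates and `b'` is the common `B'`-coordinate of `z`. So it suffices to make the
homotopy sections in a cover of `E^n_B` strict, which uses that `p` is a `G`-fibration. Given a
homotopy `H` from `Π_n ∘ s` to the inclusion, the path in `E` running along the base `s x` of a
comb and up and down the teeth `t ↦ H (x, t)_i` lies over a path in `B` which, at the tips of
the teeth, is at its endpoint `p x₀`. Lifting the homotopy that pushes this base path to its
endpoint, and stopping each point as soon as its base point arrives there, gives a path in the
fibre of `x` through the points `x_i` at the times `i / (n - 1)`.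
-/

open unitInterval

noncomputable section Comb

/- `r ↦ (combPos m r, combHeight m r)` runs along a comb with teeth at the nodes `k / m`: the
height is positive only within `1 / (3 m)` of a node, and there the position is that node. -/
def combHeight (m : ℕ) (r : ℝ) : ℝ :=
  max 0 (1 - 3 * Metric.infDist (m * r) (range ((↑) : ℤ → ℝ)))

def combPos (m : ℕ) (r : ℝ) : ℝ :=
  (∑ j ∈ Finset.range m, (projIcc (0 : ℝ) 1 zero_le_one (3 * (m * r - j) - 1) : ℝ)) / m

variable {m : ℕ} {r : ℝ}

theorem continuous_combHeight (m : ℕ) : Continuous (combHeight m) := by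
  unfold combHeight
  fun_prop

theorem continuous_combPos (m : ℕ) : Continuous (combPos m) := by
  unfold combPos
  refine Continuous.div_const (continuous_finsetSum _ fun j _ => ?_) _
  exact continuous_subtype_val.comp (continuous_projIcc.comp (by fun_prop))

theorem combHeight_mem_unitInterval (m : ℕ) (r : ℝ) : combHeight m r ∈ I := by
  have := Metric.infDist_nonneg (x := (m : ℝ) * r) (s := range ((↑) : ℤ → ℝ))
  exact ⟨le_max_left _ _, max_le zero_le_one (by linarith)⟩

theorem combPos_mem_unitInterval (m : ℕ) (r : ℝ) : combPos m r ∈ I := by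
  have hsum : ∑ j ∈ Finset.range m, (projIcc (0 : ℝ) 1 zero_le_one (3 * (m * r - j) - 1) : ℝ)
      ∈ Icc 0 (m : ℝ) := by
    constructor
    · exact Finset.sum_nonneg fun j _ => (projIcc _ _ _ _).2.1
    · simpa using Finset.sum_le_sum fun j (_ : j ∈ Finset.range m) =>
        (projIcc (0 : ℝ) 1 zero_le_one (3 * (m * r - j) - 1)).2.2
  exact ⟨div_nonneg hsum.1 m.cast_nonneg, div_le_one_of_le₀ hsum.2 m.cast_nonneg⟩

theorem combHeight_eq_one {k : ℤ} (h : (m : ℝ) * r = k) : combHeight m r = 1 := by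
  simp [combHeight, h, Metric.infDist_zero_of_mem (mem_range_self k)]

theorem combPos_eq_of_abs_lt {k : ℕ} (hk : k ≤ m) (h : |(m : ℝ) * r - k| < 1 / 3) :
    combPos m r = k / m := by
  obtain ⟨hlo, hhi⟩ := abs_lt.mp h
  rw [combPos, ← Finset.sum_range_add_sum_Ico _ hk]
  congr 1
  have hone : ∀ j ∈ Finset.range k,
      (projIcc (0 : ℝ) 1 zero_le_one (3 * (m * r - j) - 1) : ℝ) = 1 := fun j hj => by
    have : (j : ℝ) + 1 ≤ k := by exact_mod_cast Finset.mem_range.mp hj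
    rw [projIcc_of_right_le _ (by linarith)]
  have hzero : ∀ j ∈ Finset.Ico k m,
      (projIcc (0 : ℝ) 1 zero_le_one (3 * (m * r - j) - 1) : ℝ) = 0 := fun j hj => by
    have : (k : ℝ) ≤ j := by exact_mod_cast (Finset.mem_Ico.mp hj).1
    rw [projIcc_of_le_left _ (by linarith)]
  simp [Finset.sum_congr rfl hone, Finset.sum_congr rfl hzero]

theorem exists_combPos_eq (hr : r ∈ I) (h : 0 < combHeight m r) :
    ∃ k ≤ m, combPos m r = k / m := by
  have hdist : Metric.infDist (m * r) (range ((↑) : ℤ → ℝ)) < 1 / 3 := by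
    rw [combHeight, lt_max_iff] at h
    rcases h with h | h
    · exact absurd h (lt_irrefl 0)
    · linarith
  obtain ⟨_, ⟨k, rfl⟩, hk⟩ := (Metric.infDist_lt_iff (range_nonempty _)).mp hdist
  rw [Real.dist_eq] at hk
  have hmr : (m : ℝ) * r ∈ Icc 0 (m : ℝ) :=
    ⟨mul_nonneg m.cast_nonneg hr.1, mul_le_of_le_one_right m.cast_nonneg hr.2⟩
  obtain ⟨hlo, hhi⟩ := abs_lt.mp hk
  have hk0 : 0 ≤ k := by
    have : (-1 : ℝ) < k := by linarith [hmr.1]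
    have : (-1 : ℤ) < k := by exact_mod_cast this
    omega
  lift k to ℕ using hk0
  have hkm : k ≤ m := by
    have : (k : ℝ) < m + 1 := by push_cast at hlo; linarith [hmr.2]
    exact Nat.lt_succ_iff.mp (by exact_mod_cast this)
  exact ⟨k, hkm, combPos_eq_of_abs_lt hkm (by exact_mod_cast hk)⟩


theorem natCast_pred_mul_seqTime {n : ℕ} (i : Fin n) :
    ((n - 1 : ℕ) : ℝ) * seqTime n i = i := by
  change ((n - 1 : ℕ) : ℝ) * (i / ((n : ℝ) - 1)) = i
  rw [Nat.cast_pred i.pos]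
  rcases eq_or_ne ((n : ℝ) - 1) 0 with h | h
  · have : n = 1 := by
      have : (n : ℝ) = 1 := by linarith
      exact_mod_cast this
    subst this
    simp [Fin.fin_one_eq_zero i]
  · exact mul_div_cancel₀ _ h

theorem seqTime_injective (n : ℕ) : Function.Injective (seqTime n) := fun i j h => by
  have := natCast_pred_mul_seqTime i
  rw [h, natCast_pred_mul_seqTime j] at this
  exact Fin.ext (by exact_mod_cast this.symm)

def comb (n : ℕ) : Set (I × I) := (range (seqTime n) ×ˢ univ) ∪ (univ ×ˢ {0})

def combPoint (n : ℕ) (r : I) : I × I :=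
  (⟨combPos (n - 1) r, combPos_mem_unitInterval _ _⟩,
    ⟨combHeight (n - 1) r, combHeight_mem_unitInterval _ _⟩)

theorem continuous_combPoint (n : ℕ) : Continuous (combPoint n) :=
  (((continuous_combPos _).comp continuous_subtype_val).subtype_mk _).prodMk
    (((continuous_combHeight _).comp continuous_subtype_val).subtype_mk _)

theorem combPoint_mem_comb {n : ℕ} [NeZero n] (r : I) : combPoint n r ∈ comb n := by
  rcases (combHeight_mem_unitInterval (n - 1) r).1.eq_or_lt with h | h
  · exact Or.inr ⟨trivial, Subtype.ext h.symm⟩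
  · obtain ⟨k, hk, hpos⟩ := exists_combPos_eq r.2 h
    have hkn : k < n := by have := NeZero.pos n; omega
    refine Or.inl ⟨⟨⟨k, hkn⟩, Subtype.ext ?_⟩, trivial⟩
    change (k : ℝ) / ((n : ℝ) - 1) = combPos (n - 1) r
    rw [hpos, Nat.cast_pred (NeZero.pos n)]

theorem combPoint_seqTime {n : ℕ} (i : Fin n) : combPoint n (seqTime n i) = (seqTime n i, 1) := by
  have hnode := natCast_pred_mul_seqTime i
  refine Prod.ext (Subtype.ext ?_) (Subtype.ext (combHeight_eq_one (k := (i : ℕ)) hnode))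
  change combPos (n - 1) (seqTime n i) = seqTime n i
  rw [combPos_eq_of_abs_lt (k := i) (by have := i.2; omega) (by simp [hnode]),
    Nat.cast_pred i.pos]
  rfl

end Comb

universe uE uB

theorem isGAction_smul (G X : Type*) [Group G] [TopologicalSpace G] [TopologicalSpace X]
    [MulAction G X] [ContinuousSMul G X] : IsGAction G (fun (a : G) (x : X) => a • x) :=
  ⟨one_smul G, mul_smul, continuous_smul⟩

section GAction

variable {G : Type*} [Group G] [TopologicalSpace G] {X : Type*} [TopologicalSpace X]
  {σX : G → X → X}

theorem IsGAction.prod_trivial (h : IsGAction G σX) (T : Type*) [TopologicalSpace T] :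
    IsGAction G (fun a (y : X × T) => (σX a y.1, y.2)) :=
  ⟨fun y => by simp [h.1], fun a b y => by simp [h.2.1],
    (h.2.2.comp (continuous_fst.prodMk (continuous_fst.comp continuous_snd))).prodMk
      (continuous_snd.comp continuous_snd)⟩

theorem IsGAction.ulift.{w, v} {X : Type w} [TopologicalSpace X] {σX : G → X → X}
    (h : IsGAction G σX) : IsGAction G (fun a (y : ULift.{v} X) => ULift.up (σX a y.down)) :=
  ⟨fun y => by simp [h.1], fun a b y => by simp [h.2.1],
    continuous_uliftUp.comp (h.2.2.comp (continuous_fst.prodMk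
      (continuous_uliftDown.comp continuous_snd)))⟩

theorem IsGAction.restrict (h : IsGAction G σX) {U : Set X}
    (hU : ∀ a : G, ∀ x ∈ U, σX a x ∈ U) :
    IsGAction G (fun a (x : U) => (⟨σX a x, hU a x x.2⟩ : U)) :=
  ⟨fun x => Subtype.ext (h.1 x), fun a b x => Subtype.ext (h.2.1 a b x),
    (h.2.2.comp (continuous_fst.prodMk (continuous_subtype_val.comp continuous_snd))).subtype_mk _⟩

theorem IsGAction.fibProdAct {E B : Type*} [TopologicalSpace E] {σE : G → E → E}
    (h : IsGAction G σE) (p : E → B)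
    (hp : ∀ a : G, ∀ e e' : E, p e = p e' → p (σE a e) = p (σE a e')) (n : ℕ) :
    IsGAction G (fibProdAct σE p hp n) :=
  ⟨fun _ => Subtype.ext (funext fun _ => h.1 _),
    fun a b _ => Subtype.ext (funext fun _ => h.2.1 a b _),
    (continuous_pi fun i => h.2.2.comp (continuous_fst.prodMk ((continuous_apply i).comp
      (continuous_subtype_val.comp continuous_snd)))).subtype_mk _⟩

end GAction

section Transport

variable {G : Type*} [Group G] [TopologicalSpace G] {E : Type uE} {B : Type uB}
  [TopologicalSpace E] [TopologicalSpace B] {σE : G → E → E} {σB : G → B → B} {p : E → B}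

theorem IsGFibration.exists_transport (hp : IsGFibration G σE σB p) {Y : Type uE}
    [TopologicalSpace Y] {σY : G → Y → Y} (hσY : IsGAction G σY)
    {g : Y → E} (hg : Continuous g) (hge : ∀ a y, g (σY a y) = σE a (g y))
    {v : Y → I} (hv : Continuous v) (hve : ∀ a y, v (σY a y) = v y)
    {β : Y × I → B} (hβ : Continuous β) (hβe : ∀ a y t, β (σY a y, t) = σB a (β (y, t)))
    (hgβ : ∀ y, p (g y) = β (y, v y)) :
    ∃ g' : Y → E, Continuous g' ∧ (∀ a y, g' (σY a y) = σE a (g' y)) ∧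
      (∀ y, p (g' y) = β (y, 1)) ∧ ∀ y, v y = 1 → g' y = g y := by
  -- lift the homotopy pushing `β (y, v y)` along `β` to `β (y, 1)`; it gets there at time `1 - v y`
  obtain ⟨L, hLc, hLe, hL0, hLp⟩ := hp.2.2 (ULift.{uB} Y) inferInstance _ hσY.ulift
    (g ∘ ULift.down) (fun w => β (w.1.down, projIcc 0 1 zero_le_one (v w.1.down + w.2)))
    (hg.comp continuous_uliftDown) (fun a y => hge a y.down)
    (hβ.comp ((continuous_uliftDown.comp continuous_fst).prodMk (continuous_projIcc.comp
      ((continuous_subtype_val.comp (hv.comp (continuous_uliftDown.comp continuous_fst))).add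
        (continuous_subtype_val.comp continuous_snd)))))
    (fun a y t => by simp only [hve, hβe])
    (fun y => by simp [hgβ])
  refine ⟨fun y => L (ULift.up y, σ (v y)),
    hLc.comp (continuous_uliftUp.prodMk (continuous_symm.comp hv)),
    fun a y => by simp only [hve]; exact hLe a (ULift.up y) _, fun y => ?_, fun y hy => ?_⟩
  · rw [hLp]
    simp [coe_symm_eq]
  · simp [hy, hL0]

end Transport

noncomputable section CombLift

variable {E B X : Type*} [TopologicalSpace E] {p : E → B} {n : ℕ}

/-- Only its values on `X × comb n` matter. -/
def combMap (s : X → ParPath p) (H : X × I → FibProd p n) (z : X × (I × I)) : E :=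
  if h : ∃ i, z.2.1 = seqTime n i then (H (z.1, z.2.2)).1 h.choose else (s z.1).1 z.2.1

variable {s : X → ParPath p} {H : X × I → FibProd p n}

theorem combMap_tooth (x : X) (i : Fin n) (t : I) :
    combMap s H (x, (seqTime n i, t)) = (H (x, t)).1 i := by
  have h : ∃ j, seqTime n i = seqTime n j := ⟨i, rfl⟩
  rw [combMap, dif_pos h, seqTime_injective n h.choose_spec.symm]

theorem combMap_base (hH0 : ∀ x, H (x, 0) = PiN p n (s x)) (x : X) (q : I) :
    combMap s H (x, (q, 0)) = (s x).1 q := by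
  by_cases h : ∃ i, q = seqTime n i
  · obtain ⟨i, rfl⟩ := h
    rw [combMap_tooth, hH0]
    rfl
  · rw [combMap, dif_neg h]

theorem continuousOn_combMap [TopologicalSpace X] (hs : Continuous s) (hH : Continuous H)
    (hH0 : ∀ x, H (x, 0) = PiN p n (s x)) : ContinuousOn (combMap s H) (univ ×ˢ comb n) := by
  have hteeth : ContinuousOn (combMap s H) (⋃ i, univ ×ˢ ({seqTime n i} ×ˢ univ)) := by
    refine (locallyFinite_of_finite _).continuousOn_iUnion
      (fun i => isClosed_univ.prod (isClosed_singleton.prod isClosed_univ)) fun i => ?_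
    refine ((continuous_apply i).comp (continuous_subtype_val.comp (hH.comp
      (continuous_fst.prodMk (continuous_snd.comp continuous_snd))))).continuousOn.congr ?_
    rintro ⟨x, q, t⟩ ⟨-, rfl : q = seqTime n i, -⟩
    exact combMap_tooth x i t
  have hbase : ContinuousOn (combMap s H) (univ ×ˢ (univ ×ˢ {0})) := by
    refine (continuous_eval.comp ((continuous_subtype_val.comp
      (hs.comp continuous_fst)).prodMk (continuous_fst.comp continuous_snd))).continuousOn.congr ?_
    rintro ⟨x, q, t⟩ ⟨-, -, rfl : t = 0⟩
    exact combMap_base hH0 x q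
  have hsplit : univ ×ˢ comb n = (⋃ i, univ ×ˢ ({seqTime n i} ×ˢ univ)) ∪
      (univ ×ˢ (univ ×ˢ {0}) : Set (X × (I × I))) := by
    rw [comb, prod_union, ← iUnion_singleton_eq_range, iUnion_prod_const, prod_iUnion]
  rw [hsplit]
  exact hteeth.union_of_isClosed hbase
    (isClosed_iUnion_of_finite fun i => isClosed_univ.prod (isClosed_singleton.prod isClosed_univ))
    (isClosed_univ.prod (isClosed_univ.prod isClosed_singleton))

theorem combMap_fiber (hH0 : ∀ x, H (x, 0) = PiN p n (s x)) (x : X) {qt : I × I}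
    (hqt : qt ∈ comb n) (i : Fin n) : p (combMap s H (x, qt)) = p ((H (x, qt.2)).1 i) := by
  obtain ⟨q, t⟩ := qt
  rcases hqt with ⟨⟨j, rfl : seqTime n j = q⟩, -⟩ | ⟨-, rfl : t = 0⟩
  · rw [combMap_tooth]
    exact (H (x, t)).2 j i
  · rw [combMap_base hH0, hH0]
    exact (s x).2 _ _

theorem combMap_equivariant {G : Type*} {σE : G → E → E} {σX : G → X → X}
    {hc : ∀ a : G, Continuous (σE a)}
    {hpc : ∀ a : G, ∀ e e' : E, p e = p e' → p (σE a e) = p (σE a e')}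
    (hse : ∀ a x, s (σX a x) = parPathAct σE hc p hpc a (s x))
    (hHe : ∀ a x t, H (σX a x, t) = fibProdAct σE p hpc n a (H (x, t)))
    (a : G) (x : X) (qt : I × I) : combMap s H (σX a x, qt) = σE a (combMap s H (x, qt)) := by
  by_cases h : ∃ i, qt.1 = seqTime n i
  · simp only [combMap, dif_pos h, hHe]
    rfl
  · simp only [combMap, dif_neg h, hse]
    rfl

end CombLift

section Secat

variable {E B : Type*} [TopologicalSpace E] [TopologicalSpace B]

/-- The data of one member of a cover in the definition of `eqSecat`. -/
def IsGHomotopySectionOn (G : Type*) (σE : G → E → E) (σB : G → B → B) (p : E → B) (U : Set B)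
    (s : B → E) : Prop :=
  ContinuousOn s U ∧ (∀ a : G, ∀ b ∈ U, s (σB a b) = σE a (s b)) ∧
    GHomotopicOn G σB σB (p ∘ s) id U

theorem eqSecat_le_of_map {G E₂ B₂ : Type*} [TopologicalSpace E₂] [TopologicalSpace B₂]
    {σE : G → E → E} {σB : G → B → B} {p : E → B}
    {σE₂ : G → E₂ → E₂} {σB₂ : G → B₂ → B₂} {p₂ : E₂ → B₂}
    (φ : B₂ → B) (hφ : Continuous φ) (hφe : ∀ a b, φ (σB₂ a b) = σB a (φ b))
    (h : ∀ U : Set B, (∀ a : G, ∀ b ∈ U, σB a b ∈ U) → ∀ s,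
      IsGHomotopySectionOn G σE σB p U s → ∃ s₂, IsGHomotopySectionOn G σE₂ σB₂ p₂ (φ ⁻¹' U) s₂) :
    eqSecat G σE₂ σB₂ p₂ ≤ eqSecat G σE σB p := by
  refine sInf_le_sInf ?_
  rintro _ ⟨k, rfl, U, hUo, hUinv, hUcov, hUsec⟩
  refine ⟨k, rfl, fun i => φ ⁻¹' U i, fun i => (hUo i).preimage hφ, fun i a b hb => ?_,
    fun b => hUcov (φ b), fun i => ?_⟩
  · rw [mem_preimage, hφe]
    exact hUinv i a _ hb
  · obtain ⟨s, hs⟩ := hUsec i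
    exact h _ (hUinv i) s hs

theorem isGHomotopySectionOn_dite {G : Type*} {σE : G → E → E} {σB : G → B → B} {p : E → B}
    {U : Set B} [DecidablePred (· ∈ U)] (hU : ∀ a : G, ∀ b ∈ U, σB a b ∈ U) (s : U → E) (hs : Continuous s)
    (hse : ∀ a (b : U), s ⟨σB a b, hU a b b.2⟩ = σE a (s b))
    (hps : ∀ b, p (s b) = b) (s₀ : B → E) :
    IsGHomotopySectionOn G σE σB p U (fun b => if h : b ∈ U then s ⟨b, h⟩ else s₀ b) := by
  refine ⟨?_, fun a b hb => ?_, fun q => q.1, continuous_fst.continuousOn, fun b hb => ?_,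
    fun _ _ => rfl, fun _ _ _ _ => rfl⟩
  · rw [continuousOn_iff_continuous_domRestrict]
    convert hs using 1
    ext b
    simp [b.2]
  · simp only [dif_pos hb, dif_pos (hU a b hb)]
    exact hse a ⟨b, hb⟩
  · simp [dif_pos hb, hps]

end Secat

section StrictSection

variable {G : Type*} [Group G] [TopologicalSpace G] {E : Type uE} {B : Type uB}
  [TopologicalSpace E] [TopologicalSpace B] {σE : G → E → E} {σB : G → B → B} {p : E → B}
  {hc : ∀ a : G, Continuous (σE a)}
  {hpc : ∀ a : G, ∀ e e' : E, p e = p e' → p (σE a e) = p (σE a e')}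

theorem IsGFibration.exists_lift_piN_of_homotopy (hp : IsGFibration G σE σB p) {n : ℕ} [NeZero n]
    {X : Type uE} [TopologicalSpace X] {σX : G → X → X} (hσX : IsGAction G σX)
    {s : X → ParPath p} (hs : Continuous s)
    (hse : ∀ a x, s (σX a x) = parPathAct σE hc p hpc a (s x))
    {H : X × I → FibProd p n} (hH : Continuous H)
    (hHe : ∀ a x t, H (σX a x, t) = fibProdAct σE p hpc n a (H (x, t)))
    (hH0 : ∀ x, H (x, 0) = PiN p n (s x)) :
    ∃ s' : X → ParPath p, Continuous s' ∧
      (∀ a x, s' (σX a x) = parPathAct σE hc p hpc a (s' x)) ∧ ∀ x, PiN p n (s' x) = H (x, 1) := by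
  obtain ⟨g, hgc, hge, hgp, hgfix⟩ := hp.exists_transport (hσX.prod_trivial I)
    (g := fun y => combMap s H (y.1, combPoint n y.2))
    ((continuousOn_combMap hs hH hH0).comp_continuous
      (continuous_fst.prodMk ((continuous_combPoint n).comp continuous_snd))
      fun y => ⟨trivial, combPoint_mem_comb y.2⟩)
    (fun a y => combMap_equivariant hse hHe a y.1 _)
    (v := fun y => (combPoint n y.2).2)
    (continuous_snd.comp ((continuous_combPoint n).comp continuous_snd)) (fun _ _ => rfl)
    (β := fun w => p ((H (w.1.1, w.2)).1 0))
    (hp.1.comp ((continuous_apply 0).comp (continuous_subtype_val.comp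
      (hH.comp ((continuous_fst.comp continuous_fst).prodMk continuous_snd)))))
    (fun a y t => by simp only [hHe]; exact hp.2.1 a _)
    (fun y => combMap_fiber hH0 y.1 (combPoint_mem_comb y.2) 0)
  let γ : C(X, C(I, E)) := ContinuousMap.curry ⟨g, hgc⟩
  refine ⟨fun x => ⟨γ x, fun r r' => by simp only [γ, ContinuousMap.curry_apply,
      ContinuousMap.coe_mk, hgp]⟩, γ.continuous.subtype_mk _,
    fun a x => Subtype.ext (ContinuousMap.ext fun r => hge a (x, r)),
    fun x => Subtype.ext (funext fun i => ?_)⟩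
  change g (x, seqTime n i) = (H (x, 1)).1 i
  rw [hgfix (x, seqTime n i) (by simp [combPoint_seqTime])]
  simp [combPoint_seqTime, combMap_tooth]

theorem IsGFibration.exists_strict_section_piN (hp : IsGFibration G σE σB p) (hσE : IsGAction G σE)
    {n : ℕ} [NeZero n] {U : Set (FibProd p n)}
    (hU : ∀ a : G, ∀ x ∈ U, fibProdAct σE p hpc n a x ∈ U)
    {s : FibProd p n → ParPath p}
    (hs : IsGHomotopySectionOn G (parPathAct σE hc p hpc) (fibProdAct σE p hpc n) (PiN p n) U s) :
    ∃ s' : U → ParPath p, Continuous s' ∧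
      (∀ a (x : U), s' ⟨_, hU a x x.2⟩ = parPathAct σE hc p hpc a (s' x)) ∧
      ∀ x, PiN p n (s' x) = x := by
  obtain ⟨hsc, hse, H, hH, hH0, hH1, hHe⟩ := hs
  obtain ⟨s', hs'c, hs'e, hs'p⟩ :=
    hp.exists_lift_piN_of_homotopy ((hσE.fibProdAct p hpc n).restrict hU)
    (s := U.domRestrict s) hsc.domRestrict (fun a x => hse a x x.2)
    (H := fun w => H (w.1.1, w.2)) (hH.comp_continuous (by fun_prop) fun w => ⟨w.1.2, trivial⟩)
    (fun a x t => hHe a x x.2 t) (fun x => hH0 x x.2)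
  exact ⟨s', hs'c, hs'e, fun x => (hs'p x).trans (hH1 x x.2)⟩

end StrictSection

section Pullback

variable {G E B B' : Type*} [TopologicalSpace E] [TopologicalSpace B'] {p : E → B} {f : B' → B}

def pullbackFibProdMap (n : ℕ) :
    FibProd (fun q : {q : B' × E // f q.1 = p q.2} => q.1.1) n → FibProd p n :=
  fun z => ⟨fun i => (z.1 i).1.2, fun i j => by
    rw [← (z.1 i).2, ← (z.1 j).2]
    exact congrArg f (z.2 i j)⟩

theorem continuous_pullbackFibProdMap (n : ℕ) :
    Continuous (pullbackFibProdMap (p := p) (f := f) n) :=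
  (continuous_pi fun i => continuous_snd.comp (continuous_subtype_val.comp
    ((continuous_apply i).comp continuous_subtype_val))).subtype_mk _

def pullbackPath (b' : B') (γ : ParPath p) (h : f b' = p (γ.1 0)) :
    ParPath (fun q : {q : B' × E // f q.1 = p q.2} => q.1.1) :=
  ⟨⟨fun r => ⟨(b', γ.1 r), h.trans (γ.2 0 r)⟩,
    (continuous_const.prodMk γ.1.continuous).subtype_mk _⟩, fun _ _ => rfl⟩

variable [SMul G E] [SMul G B] [SMul G B']

def pullbackAct (hfe : ∀ (a : G) (b : B'), f (a • b) = a • f b)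
    (hpe : ∀ (a : G) (e : E), p (a • e) = a • p e) (a : G) (q : {q : B' × E // f q.1 = p q.2}) :
    {q : B' × E // f q.1 = p q.2} :=
  ⟨(a • q.1.1, a • q.1.2), by rw [hfe, hpe, q.2]⟩

variable {hfe : ∀ (a : G) (b : B'), f (a • b) = a • f b}
  {hpe : ∀ (a : G) (e : E), p (a • e) = a • p e}
  {hc : ∀ a : G, Continuous fun e : E => a • e}
  {hpc : ∀ (a : G) (e e' : E), p e = p e' → p (a • e) = p (a • e')}
  {hc' : ∀ a : G, Continuous (pullbackAct hfe hpe a)}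
  {hpc' : ∀ (a : G) (q q' : {q : B' × E // f q.1 = p q.2}), q.1.1 = q'.1.1 →
    (pullbackAct hfe hpe a q).1.1 = (pullbackAct hfe hpe a q').1.1}

theorem exists_pullback_section_piN {n : ℕ} [NeZero n] {U : Set (FibProd p n)}
    (hU : ∀ a : G, ∀ x ∈ U, fibProdAct (fun (a : G) (e : E) => a • e) p hpc n a x ∈ U)
    (s : U → ParPath p) (hs : Continuous s)
    (hse : ∀ a (x : U), s ⟨_, hU a x x.2⟩ =
      parPathAct (fun (a : G) (e : E) => a • e) hc p hpc a (s x))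
    (hps : ∀ x, PiN p n (s x) = x) :
    ∃ s' : pullbackFibProdMap n ⁻¹' U → ParPath (fun q : {q : B' × E // f q.1 = p q.2} => q.1.1),
      Continuous s' ∧
      (∀ a (z : pullbackFibProdMap n ⁻¹' U),
        s' ⟨fibProdAct (pullbackAct hfe hpe) _ hpc' n a z.1, hU a _ z.2⟩ =
          parPathAct (pullbackAct hfe hpe) hc' _ hpc' a (s' z)) ∧
      ∀ z, PiN _ n (s' z) = z := by
  have hbase : ∀ z : pullbackFibProdMap n ⁻¹' U,
      f (z.1.1 0).1.1 = p ((s (U.restrictPreimage _ z)).1 0) := fun z =>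
    (z.1.1 0).2.trans ((congrArg (fun x : FibProd p n => p (x.1 0))
      (hps (U.restrictPreimage _ z))).symm.trans ((s _).2 _ _))
  refine ⟨fun z => pullbackPath (z.1.1 0).1.1 (s (U.restrictPreimage _ z)) (hbase z), ?_,
    fun a z => Subtype.ext (ContinuousMap.ext fun r => Subtype.ext (Prod.ext rfl ?_)),
    fun z => Subtype.ext (funext fun i => Subtype.ext (Prod.ext (z.1.2 0 i) ?_))⟩
  · have hs' : Continuous fun z => s (U.restrictPreimage (pullbackFibProdMap (f := f) n) z) :=
      hs.comp (continuous_pullbackFibProdMap n).restrictPreimage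
    refine (ContinuousMap.continuous_of_continuous_uncurry _ ?_).subtype_mk _
    refine Continuous.subtype_mk (Continuous.prodMk ?_ ?_) _
    · have h0 : Continuous fun z : FibProd (fun q : {q : B' × E // f q.1 = p q.2} => q.1.1) n =>
          (z.1 0).1.1 :=
        continuous_fst.comp (continuous_subtype_val.comp
          ((continuous_apply 0).comp continuous_subtype_val))
      exact h0.comp (continuous_subtype_val.comp continuous_fst)
    · exact continuous_eval.comp
        ((continuous_subtype_val.comp (hs'.comp continuous_fst)).prodMk continuous_snd)
  · exact congrArg (fun γ : ParPath p => γ.1 r) (hse a (U.restrictPreimage _ z))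
  · exact congrArg (fun x : FibProd p n => x.1 i) (hps _)

end Pullback

theorem stmt_5 {G : Type*} [Group G] [TopologicalSpace G]
    {E B B' : Type*} [TopologicalSpace E] [TopologicalSpace B]
    [TopologicalSpace B'] [MulAction G E] [ContinuousSMul G E] [MulAction G B]
    [MulAction G B'] [ContinuousSMul G B']
    (p : E → B)
    (hp : IsGFibration G (fun (a : G) (e : E) => a • e) (fun (a : G) (b : B) => a • b) p)
    (f : B' → B) (hfe : ∀ (a : G) (b : B'), f (a • b) = a • f b)
    (n : ℕ) (hn : 2 ≤ n) :
    eqPTC G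
        (fun (a : G) (q : {q : B' × E // f q.1 = p q.2}) =>
          (⟨(a • q.1.1, a • q.1.2), by rw [hfe, hp.2.1, q.2]⟩ :
            {q : B' × E // f q.1 = p q.2}))
        (fun a => by fun_prop)
        (fun q : {q : B' × E // f q.1 = p q.2} => q.1.1)
        (fun a q q' h => congrArg (fun b => a • b) h) n ≤
      eqPTC G (fun (a : G) (e : E) => a • e) (fun a => continuous_const_smul a) p
        (fun a e e' h => by rw [hp.2.1, hp.2.1, h]) n := by
  classical
  have : NeZero n := ⟨by omega⟩
  refine eqSecat_le_of_map (pullbackFibProdMap n) (continuous_pullbackFibProdMap n)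
    (fun _ _ => rfl) fun U hU s hs => ?_
  obtain ⟨s₁, hs₁, hs₁e, hs₁p⟩ := hp.exists_strict_section_piN (isGAction_smul G E) hU hs
  obtain ⟨s₂, hs₂, hs₂e, hs₂p⟩ :=
    exists_pullback_section_piN (hfe := hfe) (hpe := hp.2.1) hU s₁ hs₁ hs₁e hs₁p
  exact ⟨_, isGHomotopySectionOn_dite (U := pullbackFibProdMap n ⁻¹' U) (fun a z hz => hU a _ hz)
    s₂ hs₂ hs₂e hs₂p
    fun z => ⟨ContinuousMap.const I (z.1 0), fun _ _ => rfl⟩⟩
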